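/- Let X be an n-poised set of N = (n+1)(n+2)/2 nodes. A squarefree polynomial μ of degree k ≤ n is a maximal curve for X (i.e., exactly d(n,k) nodes of X lie on μ) if and only if μ divides the fundamental polynomial of every node of X not lying on μ. -/

import Mathlib

/-!
Let `Y` and `Z` be the nodes on and off `μ`, and `N m = (m+1)(m+2)/2 = dim Π_m`. The nodes of `Y`
have fundamental polynomials, so evaluation `Π_n → ℝ^Y` is onto, and its kernel contains
`μ · Π_{n-k}`; rank–nullity gives `#Y ≤ N n - N (n-k) = d(n,k)`.

If `#Y = d(n,k)`, then `#Z = N (n-k)` and `Z` is `(n-k)`-poised: if `q ∈ Π_{n-k}` vanishes on `Z`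
then `μ q` vanishes on `X`. Multiplying the fundamental polynomial of `A` in `Z` by `μ` and
rescaling gives a fundamental polynomial of `A` in `X`, which by poisedness is `p*_A`.
Conversely, if `p*_A = μ q_A` for every `A ∈ Z`, the `q_A` are (up to scaling) fundamental
polynomials of degree `n - k` for `Z`, so `#Z ≤ N (n-k)`, i.e. `#Y ≥ d(n,k)`.
-/

open MvPolynomial
open scoped Classical

/-- Evaluation of a bivariate polynomial at a point of the plane. -/
noncomputable def evalPt (p : MvPolynomial (Fin 2) ℝ) (A : ℝ × ℝ) : ℝ :=
  MvPolynomial.eval ![A.1, A.2] p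

/-- `p` is an `n`-fundamental polynomial of the node `A` with respect to the node set `X`. -/
def IsFund (n : ℕ) (X : Finset (ℝ × ℝ)) (A : ℝ × ℝ)
    (p : MvPolynomial (Fin 2) ℝ) : Prop :=
  p.totalDegree ≤ n ∧ evalPt p A = 1 ∧ ∀ B ∈ X, B ≠ A → evalPt p B = 0

/-- The node set `X` is `n`-independent. -/
def Indep (n : ℕ) (X : Finset (ℝ × ℝ)) : Prop :=
  ∀ A ∈ X, ∃ p, IsFund n X A p

/-- `d(n,k) = N_n - N_{n-k} = k(2n+3-k)/2`. -/
def dd (n k : ℕ) : ℕ := k * (2 * n + 3 - k) / 2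

/-- The node set `X` is `n`-poised. -/
def Poised (n : ℕ) (X : Finset (ℝ × ℝ)) : Prop :=
  X.card = (n + 1) * (n + 2) / 2 ∧
  ∀ p : MvPolynomial (Fin 2) ℝ, p.totalDegree ≤ n →
    (∀ A ∈ X, evalPt p A = 0) → p = 0

/-- The space of polynomials of total degree at most `n` vanishing on `X`. -/
noncomputable def vanishSp (n : ℕ) (X : Finset (ℝ × ℝ)) :
    Submodule ℝ (MvPolynomial (Fin 2) ℝ) :=
  MvPolynomial.restrictTotalDegree (Fin 2) ℝ n ⊓
    ⨅ A ∈ X, LinearMap.ker ((MvPolynomial.aeval (R := ℝ) ![A.1, A.2]).toLinearMap)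

open Module Finset

@[simp] theorem evalPt_mul (p q : MvPolynomial (Fin 2) ℝ) (A : ℝ × ℝ) :
    evalPt (p * q) A = evalPt p A * evalPt q A :=
  map_mul _ p q

@[simp] theorem evalPt_sub (p q : MvPolynomial (Fin 2) ℝ) (A : ℝ × ℝ) :
    evalPt (p - q) A = evalPt p A - evalPt q A :=
  map_sub _ p q

@[simp] theorem evalPt_smul (c : ℝ) (p : MvPolynomial (Fin 2) ℝ) (A : ℝ × ℝ) :
    evalPt (c • p) A = c * evalPt p A :=
  smul_eval _ p c

theorem evalPt_sum {ι : Type*} (s : Finset ι) (p : ι → MvPolynomial (Fin 2) ℝ)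
    (A : ℝ × ℝ) :
    evalPt (∑ i ∈ s, p i) A = ∑ i ∈ s, evalPt (p i) A :=
  map_sum _ p s

theorem card_biUnion_range_antidiagonal (m : ℕ) :
    #((range (m + 1)).biUnion antidiagonal) = (m + 1) * (m + 2) / 2 := by
  rw [card_biUnion fun i _ j _ hij => disjoint_left.2 fun p hi hj =>
      hij ((mem_antidiagonal.1 hi).symm.trans (mem_antidiagonal.1 hj))]
  simp_rw [Nat.card_antidiagonal]
  have hshift : ∑ j ∈ range (m + 1), (j + 1) = ∑ i ∈ range (m + 2), i := by
    simpa using (sum_range_succ' id (m + 1)).symm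
  rw [hshift, sum_range_id, mul_comm]
  rfl

theorem finrank_restrictTotalDegree_fin_two (K : Type*) [CommRing K] [Nontrivial K] (m : ℕ) :
    finrank K (restrictTotalDegree (Fin 2) K m) = (m + 1) * (m + 2) / 2 := by
  rw [restrictTotalDegree, finrank_eq_nat_card_basis (basisRestrictSupport K _),
    ← card_biUnion_range_antidiagonal, ← Nat.card_eq_finsetCard]
  refine Nat.card_congr ((Finsupp.equivFunOnFinite.trans (finTwoArrowEquiv ℕ)).subtypeEquiv
    fun d => ?_)
  simp [Finsupp.sum_fintype]

theorem dd_add (n k : ℕ) (hk : k ≤ n) :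
    dd n k + (n - k + 1) * (n - k + 2) / 2 = (n + 1) * (n + 2) / 2 := by
  obtain ⟨m, rfl⟩ := Nat.exists_eq_add_of_le hk
  rw [dd, show 2 * (k + m) + 3 - k = k + 1 + 2 * (m + 1) by omega, Nat.add_sub_cancel_left]
  have hk2 : 2 ∣ k * (k + 1 + 2 * (m + 1)) := by
    rw [mul_add, mul_left_comm]
    exact dvd_add (Nat.even_mul_succ_self k).two_dvd (dvd_mul_right 2 _)
  rw [← Nat.add_div_of_dvd_right hk2]
  ring_nf

noncomputable def evalMap (m : ℕ) (Y : Finset (ℝ × ℝ)) :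
    restrictTotalDegree (Fin 2) ℝ m →ₗ[ℝ] (Y → ℝ) :=
  LinearMap.pi fun A =>
    (aeval ![A.1.1, A.1.2]).toLinearMap ∘ₗ (restrictTotalDegree _ _ m).subtype

@[simp] theorem evalMap_apply {m : ℕ} {Y : Finset (ℝ × ℝ)}
    (p : restrictTotalDegree (Fin 2) ℝ m) (A : Y) : evalMap m Y p A = evalPt p A := by
  simp [evalMap, evalPt]

theorem indep_iff_surjective_evalMap {m : ℕ} {Y : Finset (ℝ × ℝ)} :
    Indep m Y ↔ Function.Surjective (evalMap m Y) := by
  constructor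
  · intro hY f
    choose p hp using hY
    refine ⟨⟨∑ A : Y, f A • p A A.2, Submodule.sum_mem _ fun A _ =>
      Submodule.smul_mem _ _ ((mem_restrictTotalDegree _ _ _).2 (hp A A.2).1)⟩,
      funext fun B => ?_⟩
    rw [evalMap_apply, Submodule.coe_mk, evalPt_sum, sum_eq_single B]
    · simp [(hp B B.2).2.1]
    · intro A _ hAB
      simp [(hp A A.2).2.2 B B.2 fun h => hAB (Subtype.ext h).symm]
    · simp
  · intro hsurj A hA
    obtain ⟨p, hp⟩ := hsurj (Pi.single ⟨A, hA⟩ 1)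
    refine ⟨p, (mem_restrictTotalDegree _ _ _).1 p.2, ?_, fun B hB hBA => ?_⟩
    · simpa using congr_fun hp ⟨A, hA⟩
    · simpa [Subtype.ext_iff, hBA] using congr_fun hp ⟨B, hB⟩

theorem Indep.mono {n : ℕ} {X Y : Finset (ℝ × ℝ)} (hX : Indep n X) (hYX : Y ⊆ X) :
    Indep n Y :=
  fun A hA => (hX A (hYX hA)).imp fun _ hp => ⟨hp.1, hp.2.1, fun B hB => hp.2.2 B (hYX hB)⟩

theorem Indep.card_le {m : ℕ} {Y : Finset (ℝ × ℝ)} (hY : Indep m Y) :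
    #Y ≤ (m + 1) * (m + 2) / 2 := by
  have := LinearMap.finrank_range_le (evalMap m Y)
  rwa [LinearMap.range_eq_top.2 (indep_iff_surjective_evalMap.1 hY), finrank_top,
    finrank_fintype_fun_eq_card, Fintype.card_coe, finrank_restrictTotalDegree_fin_two] at this

theorem Poised.injective_evalMap {n : ℕ} {X : Finset (ℝ × ℝ)} (hX : Poised n X) :
    Function.Injective (evalMap n X) := by
  rw [← LinearMap.ker_eq_bot, eq_bot_iff]
  intro p hp
  rw [Submodule.mem_bot, ← Submodule.coe_eq_zero]
  exact hX.2 p ((mem_restrictTotalDegree _ _ _).1 p.2) fun A hA => by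
    simpa using congr_fun (LinearMap.mem_ker.1 hp) ⟨A, hA⟩

theorem Poised.indep {n : ℕ} {X : Finset (ℝ × ℝ)} (hX : Poised n X) : Indep n X := by
  have hdim : finrank ℝ (restrictTotalDegree (Fin 2) ℝ n) = finrank ℝ (X → ℝ) := by
    rw [finrank_restrictTotalDegree_fin_two, finrank_fintype_fun_eq_card, Fintype.card_coe, hX.1]
  rw [indep_iff_surjective_evalMap,
    ← LinearMap.injective_iff_surjective_of_finrank_eq_finrank hdim]
  exact hX.injective_evalMap

theorem Poised.eq_of_isFund {n : ℕ} {X : Finset (ℝ × ℝ)} (hX : Poised n X) {A : ℝ × ℝ}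
    {p q : MvPolynomial (Fin 2) ℝ} (hp : IsFund n X A p) (hq : IsFund n X A q) :
    p = q := by
  refine sub_eq_zero.1 (hX.2 _ ((totalDegree_sub p q).trans (max_le hp.1 hq.1)) fun B hB => ?_)
  obtain rfl | hBA := eq_or_ne B A
  · simp [hp.2.1, hq.2.1]
  · simp [hp.2.2 B hB hBA, hq.2.2 B hB hBA]

section Curve

variable {n m : ℕ} {X : Finset (ℝ × ℝ)} {μ : MvPolynomial (Fin 2) ℝ}

theorem Indep.card_add_le_of_eval_eq_zero (hX : Indep n X) (hμ : μ ≠ 0)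
    (hdeg : μ.totalDegree + m ≤ n) (hvan : ∀ A ∈ X, evalPt μ A = 0) :
    #X + (m + 1) * (m + 2) / 2 ≤ (n + 1) * (n + 2) / 2 := by
  let L := (LinearMap.mulLeft ℝ μ).restrict (p := restrictTotalDegree (Fin 2) ℝ m)
    (q := restrictTotalDegree (Fin 2) ℝ n) fun q hq => by
      rw [mem_restrictTotalDegree] at hq ⊢
      exact (totalDegree_mul μ q).trans (by omega)
  have hL : Function.Injective L := fun q r h =>
    Subtype.ext (mul_left_cancel₀ hμ (congrArg Subtype.val h))
  have hrange : LinearMap.range L ≤ LinearMap.ker (evalMap n X) := by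
    rintro _ ⟨q, rfl⟩
    ext A
    simp [L, hvan A A.2]
  calc #X + (m + 1) * (m + 2) / 2
      = finrank ℝ (LinearMap.range (evalMap n X)) + finrank ℝ (LinearMap.range L) := by
        rw [LinearMap.range_eq_top.2 (indep_iff_surjective_evalMap.1 hX), finrank_top,
          finrank_fintype_fun_eq_card, Fintype.card_coe, LinearMap.finrank_range_of_inj hL,
          finrank_restrictTotalDegree_fin_two]
    _ ≤ finrank ℝ (LinearMap.range (evalMap n X)) + finrank ℝ (LinearMap.ker (evalMap n X)) :=
        Nat.add_le_add_left (Submodule.finrank_mono hrange) _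
    _ = (n + 1) * (n + 2) / 2 := by
        rw [LinearMap.finrank_range_add_finrank_ker, finrank_restrictTotalDegree_fin_two]

theorem Poised.poised_filter_ne_zero (hX : Poised n X) (hμ : μ ≠ 0)
    (hdeg : μ.totalDegree + m ≤ n)
    (hcard : #(X.filter (evalPt μ · ≠ 0)) = (m + 1) * (m + 2) / 2) :
    Poised m (X.filter (evalPt μ · ≠ 0)) := by
  refine ⟨hcard, fun q hq hvan =>
    (mul_eq_zero.1 (hX.2 (μ * q) ?_ fun A hA => ?_)).resolve_left hμ⟩
  · exact (totalDegree_mul μ q).trans (by omega)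
  · by_cases hμA : evalPt μ A = 0
    · simp [hμA]
    · simp [hvan A (mem_filter.2 ⟨hA, hμA⟩)]

theorem IsFund.smul_mul {A : ℝ × ℝ} {q : MvPolynomial (Fin 2) ℝ}
    (hq : IsFund m (X.filter (evalPt μ · ≠ 0)) A q) (hA : evalPt μ A ≠ 0)
    (hdeg : μ.totalDegree + m ≤ n) : IsFund n X A ((evalPt μ A)⁻¹ • (μ * q)) := by
  refine ⟨(totalDegree_smul_le _ _).trans ((totalDegree_mul μ q).trans (by linarith [hq.1])),
    by simp [hq.2.1, hA], fun B hB hBA => ?_⟩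
  by_cases hμB : evalPt μ B = 0
  · simp [hμB]
  · simp [hq.2.2 B (mem_filter.2 ⟨hB, hμB⟩) hBA]

theorem IsFund.of_mul {A : ℝ × ℝ} {q : MvPolynomial (Fin 2) ℝ} (hp : IsFund n X A (μ * q))
    (hμ : μ ≠ 0) :
    IsFund (n - μ.totalDegree) (X.filter (evalPt μ · ≠ 0)) A (evalPt μ A • q) := by
  have hq : q ≠ 0 := by
    rintro rfl
    simpa [evalPt] using hp.2.1
  refine ⟨(totalDegree_smul_le _ _).trans ?_, by simpa using hp.2.1, fun B hB hBA => ?_⟩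
  · have := hp.1
    rw [totalDegree_mul_of_isDomain hμ hq] at this
    omega
  · have hpB := hp.2.2 B (mem_filter.1 hB).1 hBA
    simp only [evalPt_mul, mul_eq_zero] at hpB
    simp [hpB.resolve_left (mem_filter.1 hB).2]

end Curve

theorem stmt8 (n k : ℕ) (hk : k ≤ n) (X : Finset (ℝ × ℝ)) (hX : Poised n X)
    (μ : MvPolynomial (Fin 2) ℝ) (hμ : μ.totalDegree = k) (hsf : Squarefree μ) :
    (X.filter (fun A => evalPt μ A = 0)).card = dd n k ↔
      ∀ A ∈ X, evalPt μ A ≠ 0 → ∀ p, IsFund n X A p → μ ∣ p := by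
  have hμ0 : μ ≠ 0 := hsf.ne_zero
  have hdeg : μ.totalDegree + (n - k) ≤ n := by omega
  have hsplit : #(X.filter (evalPt μ · = 0)) + #(X.filter (evalPt μ · ≠ 0)) = #X :=
    card_filter_add_card_filter_not _
  have hcurve := (hX.indep.mono (filter_subset _ X)).card_add_le_of_eval_eq_zero hμ0 hdeg
    fun A hA => (mem_filter.1 hA).2
  have hdd := dd_add n k hk
  have hcard := hX.1
  constructor
  · intro hon A hA hμA p hp
    have hoff := hX.poised_filter_ne_zero hμ0 hdeg (by omega)
    obtain ⟨q, hq⟩ := hoff.indep A (mem_filter.2 ⟨hA, hμA⟩)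
    rw [hX.eq_of_isFund hp (hq.smul_mul hμA hdeg), ← mul_smul_comm]
    exact dvd_mul_right μ _
  · intro hdvd
    have hoff : Indep (n - k) (X.filter (evalPt μ · ≠ 0)) := fun A hA => by
      obtain ⟨hAX, hμA⟩ := mem_filter.1 hA
      obtain ⟨p, hp⟩ := hX.indep A hAX
      obtain ⟨q, rfl⟩ := hdvd A hAX hμA p hp
      exact ⟨_, hμ ▸ hp.of_mul hμ0⟩
    have := hoff.card_le
    omega
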